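/- Let α ∈ (0,1], let V be an open set in ℝ², and let ψ ∈ C¹(V) with ψ_x, ψ_y ∈ C^{0,α}_loc(V). Let φ ∈ C¹_0(V) with K = supp φ, set ε₀ = dist(K, ℝ² ∖ V)/2 and K₀ = {x ∈ ℝ² : dist(x,K) ≤ ε₀}. Then there exists a constant C, depending on φ but not on ε, such that for all ε ∈ (0, ε₀): |∫_K R^ε(ψ_x, ψ_y) · ∂_x(ψ_x^ε φ) dx dy| ≤ C ( ε^{2α} ‖ψ_x‖²_{C^{0,α}(K₀)} ‖ψ_y‖_{C^{0,α}(K₀)} + ε^{3α−1} ‖ψ_x‖³_{C^{0,α}(K₀)} ). In particular, if α > 1/3 this integral tends to 0 as ε → 0. -/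

import Mathlib

open MeasureTheory Set

/-- Partial derivative in direction `k` on the Euclidean plane. -/
noncomputable def pd (k : Fin 2) (f : EuclideanSpace ℝ (Fin 2) → ℝ)
    (z : EuclideanSpace ℝ (Fin 2)) : ℝ :=
  fderiv ℝ f z (EuclideanSpace.single k 1)

/-- Mollification `f^ε(x) = ∫ ρ(z) f(x - εz) dz`. -/
noncomputable def mollify (ρ : EuclideanSpace ℝ (Fin 2) → ℝ) (ε : ℝ)
    (f : EuclideanSpace ℝ (Fin 2) → ℝ) (x : EuclideanSpace ℝ (Fin 2)) : ℝ :=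
  ∫ z, ρ z * f (x - ε • z)

/-- `r^ε(f,g)(x) = ∫ ρ(z) (f(x-εz) - f(x)) (g(x-εz) - g(x)) dz`. -/
noncomputable def rEps (ρ : EuclideanSpace ℝ (Fin 2) → ℝ) (ε : ℝ)
    (f g : EuclideanSpace ℝ (Fin 2) → ℝ) (x : EuclideanSpace ℝ (Fin 2)) : ℝ :=
  ∫ z, ρ z * ((f (x - ε • z) - f x) * (g (x - ε • z) - g x))

/-- `R^ε(f,g) = r^ε(f,g) - (f - f^ε)(g - g^ε)`. -/
noncomputable def REps (ρ : EuclideanSpace ℝ (Fin 2) → ℝ) (ε : ℝ)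
    (f g : EuclideanSpace ℝ (Fin 2) → ℝ) (x : EuclideanSpace ℝ (Fin 2)) : ℝ :=
  rEps ρ ε f g x - (f x - mollify ρ ε f x) * (g x - mollify ρ ε g x)

/-- The Hölder norm `‖f‖_{C^{0,α}(S)}`. -/
noncomputable def holderNorm (α : ℝ) (f : EuclideanSpace ℝ (Fin 2) → ℝ)
    (S : Set (EuclideanSpace ℝ (Fin 2))) : ℝ :=
  sSup ((fun x => |f x|) '' S) +
    sSup {r : ℝ | ∃ x ∈ S, ∃ y ∈ S, x ≠ y ∧ r = |f x - f y| / ‖x - y‖ ^ α}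

/-- `f ∈ C^{0,α}_loc(V)`. -/
def MemHolderLoc (α : ℝ) (f : EuclideanSpace ℝ (Fin 2) → ℝ)
    (V : Set (EuclideanSpace ℝ (Fin 2))) : Prop :=
  ∀ K : Set (EuclideanSpace ℝ (Fin 2)), K ⊆ V → IsCompact K →
    BddAbove ((fun x => |f x|) '' K) ∧
      BddAbove {r : ℝ | ∃ x ∈ K, ∃ y ∈ K, x ≠ y ∧ r = |f x - f y| / ‖x - y‖ ^ α}

/-!
On a compact neighbourhood `K₀` of `K = supp φ` both `ψ_x` and `ψ_y` are bounded and `α`-Hölder,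
with constants `N = ‖ψ_x‖_{C^{0,α}(K₀)}` and `M = ‖ψ_y‖_{C^{0,α}(K₀)}`. Since `ρ` is a probability
density on the unit ball, `f - f^ε` and `r^ε(f, g)` are averages of increments at scale `ε`, which
gives `|R^ε(ψ_x, ψ_y)| ≤ 2 N M ε^{2α}`. The derivative `∂_x ψ_x^ε` is the convolution of `ψ_x` with
`∂_x ρ^ε`; as `∫ ∂_x ρ = 0` it too only sees increments, so `|∂_x ψ_x^ε| ≲ N ε^{α-1}` and
`|∂_x(ψ_x^ε φ)| ≲ N (1 + ε^{α-1})`. Integrating over `K` bounds the integral by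
`(D₁ ε^{2α} + D₂ ε^{3α-1}) N² M`, which is at most `C (ε^{2α} N² M + ε^{3α-1} N³)` for
`C = D₁ + D₂ M / N`; both exponents are positive when `α > 1/3`.
-/

open Metric Filter Topology
open scoped Convolution

local notation "E2" => EuclideanSpace ℝ (Fin 2)

section Kernel

variable {Ω : Type*} {k u : Ω → ℝ} {C : ℝ}

lemma norm_mul_le_of_abs_le_of_ne_zero (hb : ∀ z, k z ≠ 0 → |u z| ≤ C) (z : Ω) :
    ‖k z * u z‖ ≤ |k z| * C := by
  rcases eq_or_ne (k z) 0 with h | h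
  · simp [h]
  · rw [Real.norm_eq_abs, abs_mul]
    exact mul_le_mul_of_nonneg_left (hb z h) (abs_nonneg _)

variable [MeasurableSpace Ω] {μ : Measure Ω}

lemma integrable_mul_of_abs_le (hk : Integrable k μ) (hu : AEStronglyMeasurable u μ)
    (hb : ∀ z, k z ≠ 0 → |u z| ≤ C) : Integrable (fun z => k z * u z) μ :=
  (hk.abs.mul_const C).mono' (hk.aestronglyMeasurable.mul hu)
    (Eventually.of_forall (norm_mul_le_of_abs_le_of_ne_zero hb))

lemma abs_integral_mul_le (hk : Integrable k μ) (hb : ∀ z, k z ≠ 0 → |u z| ≤ C) :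
    |∫ z, k z * u z ∂μ| ≤ (∫ z, |k z| ∂μ) * C := by
  rw [← Real.norm_eq_abs, ← integral_mul_const]
  exact norm_integral_le_of_norm_le (hk.abs.mul_const C)
    (Eventually.of_forall (norm_mul_le_of_abs_le_of_ne_zero hb))

end Kernel

lemma sub_smul_mem_closedBall {E : Type*} [SeminormedAddCommGroup E] [NormedSpace ℝ E] {ε : ℝ}
    {z : E} (hε : 0 ≤ ε) (hz : z ∈ closedBall 0 1) (x : E) : x - ε • z ∈ closedBall x ε := by
  rw [mem_closedBall_zero_iff] at hz
  simpa [dist_eq_norm, norm_smul, abs_of_nonneg hε] using mul_le_of_le_one_right hε hz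

structure HolderBoundOn (α N : ℝ) (f : E2 → ℝ) (S : Set E2) : Prop where
  abs_le : ∀ x ∈ S, |f x| ≤ N
  abs_sub_le : ∀ x ∈ S, ∀ y ∈ S, |f x - f y| ≤ N * ‖x - y‖ ^ α

lemma holderNorm_nonneg (α : ℝ) (f : E2 → ℝ) (S : Set E2) : 0 ≤ holderNorm α f S :=
  add_nonneg (Real.sSup_nonneg (by rintro _ ⟨x, -, rfl⟩; positivity))
    (Real.sSup_nonneg (by rintro _ ⟨x, -, y, -, -, rfl⟩; positivity))

lemma MemHolderLoc.holderBoundOn {α : ℝ} {f : E2 → ℝ} {V K : Set E2} (h : MemHolderLoc α f V)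
    (hKV : K ⊆ V) (hK : IsCompact K) : HolderBoundOn α (holderNorm α f K) f K := by
  obtain ⟨hb₁, hb₂⟩ := h K hKV hK
  set A := sSup ((fun x => |f x|) '' K)
  set B := sSup {r : ℝ | ∃ x ∈ K, ∃ y ∈ K, x ≠ y ∧ r = |f x - f y| / ‖x - y‖ ^ α}
  have hA : 0 ≤ A := Real.sSup_nonneg (by rintro _ ⟨x, -, rfl⟩; positivity)
  have hB : 0 ≤ B := Real.sSup_nonneg (by rintro _ ⟨x, -, y, -, -, rfl⟩; positivity)
  refine ⟨fun x hx => (le_csSup hb₁ ⟨x, hx, rfl⟩).trans (le_add_of_nonneg_right hB),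
    fun x hx y hy => ?_⟩
  rcases eq_or_ne x y with rfl | hxy
  · simpa using mul_nonneg (holderNorm_nonneg α f K) (Real.rpow_nonneg (norm_nonneg (x - x)) α)
  have hpos : 0 < ‖x - y‖ ^ α := Real.rpow_pos_of_pos (norm_pos_iff.2 (sub_ne_zero.2 hxy)) α
  calc |f x - f y| ≤ B * ‖x - y‖ ^ α :=
        (div_le_iff₀ hpos).1 (le_csSup hb₂ ⟨x, hx, y, hy, hxy, rfl⟩)
    _ ≤ (A + B) * ‖x - y‖ ^ α := by gcongr; exact le_add_of_nonneg_left hA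

namespace HolderBoundOn

variable {α N ε : ℝ} {f k : E2 → ℝ} {S : Set E2} {x : E2}

lemma integrableOn (hf : HolderBoundOn α N f S) (hfm : Measurable f) (hS : IsCompact S) :
    IntegrableOn f S :=
  Measure.integrableOn_of_bounded hS.measure_lt_top.ne hfm.aestronglyMeasurable
    ((ae_restrict_iff' hS.measurableSet).2 (Eventually.of_forall hf.abs_le))

lemma abs_sub_le_of_mem_closedBall {y : E2} (hf : HolderBoundOn α N f S) (hα : 0 ≤ α)
    (hS : closedBall x ε ⊆ S) (hy : y ∈ closedBall x ε) : |f y - f x| ≤ N * ε ^ α := by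
  have hx : x ∈ S := hS (mem_closedBall_self (dist_nonneg.trans hy))
  have hN : 0 ≤ N := (abs_nonneg _).trans (hf.abs_le x hx)
  calc |f y - f x| ≤ N * ‖y - x‖ ^ α := hf.abs_sub_le y (hS hy) x hx
    _ ≤ N * ε ^ α := by
      gcongr
      rwa [← dist_eq_norm]

lemma abs_integral_mul_sub_le (hf : HolderBoundOn α N f S) (hα : 0 ≤ α) (hε : 0 ≤ ε)
    (hS : closedBall x ε ⊆ S) (hk : Integrable k) (hk_supp : Function.support k ⊆ closedBall 0 1) :
    |∫ z, k z * (f (x - ε • z) - f x)| ≤ (∫ z, |k z|) * (N * ε ^ α) :=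
  abs_integral_mul_le hk fun _ hz =>
    hf.abs_sub_le_of_mem_closedBall hα hS (sub_smul_mem_closedBall hε (hk_supp hz) x)

lemma integral_mul_sub_eq (hf : HolderBoundOn α N f S) (hfm : Measurable f) (hε : 0 ≤ ε)
    (hS : closedBall x ε ⊆ S) (hk : Integrable k) (hk_supp : Function.support k ⊆ closedBall 0 1) :
    ∫ z, k z * (f (x - ε • z) - f x) = (∫ z, k z * f (x - ε • z)) - f x * ∫ z, k z := by
  have hint : Integrable fun z => k z * f (x - ε • z) :=
    integrable_mul_of_abs_le hk
      (by fun_prop : Measurable fun z => f (x - ε • z)).aestronglyMeasurable fun _ hz =>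
        hf.abs_le _ (hS (sub_smul_mem_closedBall hε (hk_supp hz) x))
  simp_rw [mul_sub]
  rw [integral_sub hint (hk.mul_const _), integral_mul_const, mul_comm]

end HolderBoundOn

section Geometry

variable {X : Type*} [PseudoMetricSpace X] {K V : Set X}

lemma sInf_image2_dist_pos (hK : IsCompact K) (hKne : K.Nonempty) (hV : IsOpen V) (hKV : K ⊆ V)
    (hVc : Vᶜ.Nonempty) : 0 < sInf (image2 dist K Vᶜ) := by
  obtain ⟨r, hr, hrV⟩ := hK.exists_thickening_subset_open hV hKV
  refine hr.trans_le (le_csInf (hKne.image2 hVc) ?_)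
  rintro _ ⟨x, hx, y, hy, rfl⟩
  by_contra! h
  exact hy (hrV (mem_thickening_iff.2 ⟨x, hx, by rwa [dist_comm]⟩))

lemma setOf_infDist_le_half_sInf_subset (hK : IsCompact K) (hKne : K.Nonempty) (hV : IsOpen V)
    (hKV : K ⊆ V) : {y | infDist y K ≤ sInf (image2 dist K Vᶜ) / 2} ⊆ V := by
  rcases Vᶜ.eq_empty_or_nonempty with hVc | hVc
  · rw [compl_empty_iff.1 hVc]
    exact subset_univ _
  intro y hy
  by_contra hyV
  obtain ⟨x, hx, hxy⟩ := hK.exists_infDist_eq_dist hKne y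
  have h₁ : sInf (image2 dist K Vᶜ) ≤ dist x y :=
    csInf_le ⟨0, by rintro _ ⟨_, -, _, -, rfl⟩; exact dist_nonneg⟩ (mem_image2_of_mem hx hyV)
  have h₂ := sInf_image2_dist_pos hK hKne hV hKV hVc
  rw [mem_ofPred_eq, hxy, dist_comm] at hy
  linarith

lemma exists_pos_setOf_infDist_le_subset (hK : IsCompact K) (hKne : K.Nonempty) (hV : IsOpen V)
    (hKV : K ⊆ V) : ∃ δ > 0, {y | infDist y K ≤ δ} ⊆ V := by
  obtain ⟨r, hr, hrV⟩ := hK.exists_thickening_subset_open hV hKV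
  exact ⟨r / 2, half_pos hr, fun y hy =>
    hrV ((mem_thickening_iff_infDist_lt hKne).2 (hy.out.trans_lt (half_lt_self hr)))⟩

lemma isCompact_setOf_infDist_le [ProperSpace X] (hK : IsCompact K) (hKne : K.Nonempty) (δ : ℝ) :
    IsCompact {y | infDist y K ≤ δ} :=
  isCompact_of_isClosed_isBounded (isClosed_le (continuous_infDist_pt K) continuous_const)
    ((hK.isBounded.thickening (δ := δ + 1)).subset fun y hy =>
      (mem_thickening_iff_infDist_lt hKne).2 (by linarith [hy.out]))

lemma closedBall_subset_setOf_infDist_le {x : X} (hx : x ∈ K) (δ : ℝ) :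
    closedBall x δ ⊆ {y | infDist y K ≤ δ} := fun _ hy =>
  (infDist_le_dist_of_mem hx).trans hy

lemma eventually_closedBall_subset_of_lt {x : X} {ε δ : ℝ} {S : Set X} (hεδ : ε < δ)
    (hS : closedBall x δ ⊆ S) : ∀ᶠ y in 𝓝 x, closedBall y ε ⊆ S :=
  eventually_of_mem (ball_mem_nhds x (sub_pos.2 hεδ)) fun _ hy =>
    (closedBall_subset_closedBall' (by linarith [mem_ball.1 hy])).trans hS

end Geometry

lemma mul_indicator_sub_smul_eq {k f : E2 → ℝ} {ε : ℝ} {S : Set E2} {x : E2}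
    (hk : Function.support k ⊆ closedBall 0 1) (hε : 0 ≤ ε) (hS : closedBall x ε ⊆ S) (z : E2) :
    k z * S.indicator f (x - ε • z) = k z * f (x - ε • z) := by
  rcases eq_or_ne (k z) 0 with h | h
  · simp [h]
  · rw [Set.indicator_of_mem (hS (sub_smul_mem_closedBall hε (hk h) x))]

lemma continuous_pd {φ : E2 → ℝ} (hφ : ContDiff ℝ 1 φ) (k : Fin 2) : Continuous (pd k φ) :=
  (hφ.continuous_fderiv one_ne_zero).clm_apply continuous_const

lemma pd_mul {f g : E2 → ℝ} {x : E2} (hf : DifferentiableAt ℝ f x) (hg : DifferentiableAt ℝ g x)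
    (k : Fin 2) : pd k (fun w => f w * g w) x = f x * pd k g x + g x * pd k f x := by
  simp [pd, fderiv_fun_mul hf hg]

lemma integral_fderiv_apply_eq_zero {E : Type*} [NormedAddCommGroup E] [NormedSpace ℝ E]
    [FiniteDimensional ℝ E] [MeasurableSpace E] [BorelSpace E] {μ : Measure E}
    [μ.IsAddHaarMeasure] {ρ : E → ℝ} (hρ : ContDiff ℝ 1 ρ) (hρc : HasCompactSupport ρ) (v : E) :
    ∫ z, fderiv ℝ ρ z v ∂μ = 0 := by
  have hρv : Integrable (fun z => fderiv ℝ ρ z v) μ :=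
    ((hρ.continuous_fderiv one_ne_zero).clm_apply continuous_const).integrable_of_hasCompactSupport
      (hρc.fderiv_apply ℝ v)
  simpa using integral_mul_fderiv_eq_neg_fderiv_mul_of_integrable (f := fun _ => (1 : ℝ)) (g := ρ)
    (v := v) (μ := μ) (by simp) (by simpa using hρv)
    (by simpa using hρ.continuous.integrable_of_hasCompactSupport hρc)
    (fun _ _ => differentiableAt_const 1) (fun x _ => hρ.differentiable one_ne_zero x)

lemma integral_eq_sq_mul_integral_comp_smul (H : E2 → ℝ) {ε : ℝ} (hε : ε ≠ 0) :
    ∫ t, H t = ε ^ 2 * ∫ z, H (ε • z) := by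
  have h := Measure.integral_comp_smul (μ := volume) H ε
  rw [finrank_euclideanSpace, Fintype.card_fin, abs_inv, abs_pow, sq_abs, smul_eq_mul] at h
  rw [h]
  field_simp

/-- The paper's `ρ^ε`: `mollify ρ ε f` is the convolution `f ⋆ ρ^ε`. -/
noncomputable def rhoEps (ρ : E2 → ℝ) (ε : ℝ) (y : E2) : ℝ :=
  (ε ^ 2)⁻¹ * ρ (ε⁻¹ • y)

section rhoEps

variable {ρ : E2 → ℝ} {ε : ℝ}

lemma contDiff_rhoEps (hρ : ContDiff ℝ 1 ρ) : ContDiff ℝ 1 (rhoEps ρ ε) :=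
  contDiff_const.mul (hρ.comp (contDiff_const_smul ε⁻¹))

lemma hasCompactSupport_rhoEps (hρ : HasCompactSupport ρ) : HasCompactSupport (rhoEps ρ ε) := by
  rcases eq_or_ne ε 0 with rfl | hε
  · have h : rhoEps ρ 0 = 0 := by ext; simp [rhoEps]
    exact h ▸ .zero
  · exact (hρ.comp_smul (inv_ne_zero hε)).mul_left

lemma fderiv_rhoEps_apply (hρ : Differentiable ℝ ρ) (y v : E2) :
    fderiv ℝ (rhoEps ρ ε) y v = (ε ^ 3)⁻¹ * fderiv ℝ ρ (ε⁻¹ • y) v := by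
  have h : HasFDerivAt (rhoEps ρ ε)
      ((ε ^ 2)⁻¹ • (fderiv ℝ ρ (ε⁻¹ • y)).comp (ε⁻¹ • ContinuousLinearMap.id ℝ E2)) y :=
    ((hρ _).hasFDerivAt.comp y ((hasFDerivAt_id y).const_smul ε⁻¹)).const_mul _
  rw [h.fderiv]
  simp only [FunLike.coe_smul, Pi.smul_apply, ContinuousLinearMap.comp_apply,
    ContinuousLinearMap.id_apply, map_smul, smul_eq_mul]
  ring

lemma convolution_fderiv_rhoEps_apply {f : E2 → ℝ} (hρ : ContDiff ℝ 1 ρ)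
    (hρc : HasCompactSupport ρ) (hf : LocallyIntegrable f) (hε : ε ≠ 0) (x v : E2) :
    (f ⋆[(ContinuousLinearMap.mul ℝ ℝ).precompR E2] fderiv ℝ (rhoEps ρ ε)) x v =
      ε⁻¹ * ∫ z, fderiv ℝ ρ z v * f (x - ε • z) := by
  rw [convolution_precompR_apply _ hf ((hasCompactSupport_rhoEps hρc).fderiv ℝ)
    ((contDiff_rhoEps hρ).continuous_fderiv one_ne_zero), convolution_eq_swap,
    integral_eq_sq_mul_integral_comp_smul _ hε, ← integral_const_mul, ← integral_const_mul]
  congr 1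
  ext z
  rw [ContinuousLinearMap.mul_apply', fderiv_rhoEps_apply (hρ.differentiable one_ne_zero),
    smul_smul, inv_mul_cancel₀ hε, one_smul]
  field_simp

end rhoEps

structure IsMollifier (ρ : E2 → ℝ) : Prop where
  contDiff : ContDiff ℝ 1 ρ
  nonneg : ∀ x, 0 ≤ ρ x
  tsupport_subset : tsupport ρ ⊆ ball 0 1
  integral_eq_one : ∫ x, ρ x = 1

namespace IsMollifier

variable {ρ : E2 → ℝ} {α N M ε : ℝ} {f g : E2 → ℝ} {S : Set E2} {x : E2}

lemma hasCompactSupport (hρ : IsMollifier ρ) : HasCompactSupport ρ :=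
  (isCompact_closedBall 0 1).of_isClosed_subset (isClosed_tsupport ρ)
    (hρ.tsupport_subset.trans ball_subset_closedBall)

lemma integrable (hρ : IsMollifier ρ) : Integrable ρ :=
  hρ.contDiff.continuous.integrable_of_hasCompactSupport hρ.hasCompactSupport

lemma support_subset (hρ : IsMollifier ρ) : Function.support ρ ⊆ closedBall 0 1 :=
  (subset_tsupport ρ).trans (hρ.tsupport_subset.trans ball_subset_closedBall)

lemma integral_abs (hρ : IsMollifier ρ) : ∫ x, |ρ x| = 1 := by
  simp_rw [abs_of_nonneg (hρ.nonneg _)]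
  exact hρ.integral_eq_one

lemma integrable_pd (hρ : IsMollifier ρ) (k : Fin 2) : Integrable (pd k ρ) :=
  (continuous_pd hρ.contDiff k).integrable_of_hasCompactSupport
    (hρ.hasCompactSupport.fderiv_apply ℝ _)

lemma support_pd_subset (hρ : IsMollifier ρ) (k : Fin 2) :
    Function.support (pd k ρ) ⊆ closedBall 0 1 := fun _ hz =>
  ball_subset_closedBall <| hρ.tsupport_subset <|
    support_fderiv_subset ℝ fun h => hz (by simp [pd, h])

lemma abs_mollify_sub_le (hρ : IsMollifier ρ) (hfm : Measurable f) (hf : HolderBoundOn α N f S)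
    (hα : 0 ≤ α) (hε : 0 ≤ ε) (hS : closedBall x ε ⊆ S) :
    |mollify ρ ε f x - f x| ≤ N * ε ^ α := by
  have h := hf.abs_integral_mul_sub_le hα hε hS hρ.integrable hρ.support_subset
  rw [hf.integral_mul_sub_eq hfm hε hS hρ.integrable hρ.support_subset, hρ.integral_eq_one,
    mul_one, hρ.integral_abs, one_mul] at h
  exact h

lemma abs_mollify_le (hρ : IsMollifier ρ) (hf : HolderBoundOn α N f S) (hε : 0 ≤ ε)
    (hS : closedBall x ε ⊆ S) : |mollify ρ ε f x| ≤ N := by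
  simpa [mollify, hρ.integral_abs] using abs_integral_mul_le (u := fun z => f (x - ε • z))
    hρ.integrable fun _ hz => hf.abs_le _ (hS (sub_smul_mem_closedBall hε (hρ.support_subset hz) x))

lemma abs_rEps_le (hρ : IsMollifier ρ) (hf : HolderBoundOn α N f S) (hg : HolderBoundOn α M g S)
    (hα : 0 ≤ α) (hε : 0 ≤ ε) (hS : closedBall x ε ⊆ S) :
    |rEps ρ ε f g x| ≤ N * ε ^ α * (M * ε ^ α) := by
  have hN : 0 ≤ N * ε ^ α :=
    (abs_nonneg _).trans (hf.abs_sub_le_of_mem_closedBall hα hS (mem_closedBall_self hε))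
  simpa [rEps, hρ.integral_abs] using abs_integral_mul_le hρ.integrable fun z hz => by
    have hz' := sub_smul_mem_closedBall hε (hρ.support_subset hz) x
    rw [abs_mul]
    exact mul_le_mul (hf.abs_sub_le_of_mem_closedBall hα hS hz')
      (hg.abs_sub_le_of_mem_closedBall hα hS hz') (abs_nonneg _) hN

lemma abs_REps_le (hρ : IsMollifier ρ) (hfm : Measurable f) (hgm : Measurable g)
    (hf : HolderBoundOn α N f S) (hg : HolderBoundOn α M g S) (hα : 0 ≤ α) (hε : 0 ≤ ε)
    (hS : closedBall x ε ⊆ S) : |REps ρ ε f g x| ≤ 2 * (N * M * ε ^ (2 * α)) := by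
  have hN : 0 ≤ N * ε ^ α :=
    (abs_nonneg _).trans (hf.abs_sub_le_of_mem_closedBall hα hS (mem_closedBall_self hε))
  have hprod : |(f x - mollify ρ ε f x) * (g x - mollify ρ ε g x)| ≤ N * ε ^ α * (M * ε ^ α) := by
    rw [abs_mul, abs_sub_comm (f x), abs_sub_comm (g x)]
    exact mul_le_mul (hρ.abs_mollify_sub_le hfm hf hα hε hS)
      (hρ.abs_mollify_sub_le hgm hg hα hε hS) (abs_nonneg _) hN
  have hpow : N * ε ^ α * (M * ε ^ α) = N * M * ε ^ (2 * α) := by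
    rw [show 2 * α = α * (2 : ℕ) by push_cast; ring, Real.rpow_mul_natCast hε]
    ring
  unfold REps
  linarith [abs_sub (rEps ρ ε f g x) ((f x - mollify ρ ε f x) * (g x - mollify ρ ε g x)),
    hρ.abs_rEps_le hf hg hα hε hS]

/-- Away from `∂S` the truncation to `S` is invisible, and it makes `f` globally integrable. -/
lemma mollify_eq_convolution_indicator (hρ : IsMollifier ρ) (hε : 0 < ε)
    (hS : closedBall x ε ⊆ S) :
    mollify ρ ε f x = (S.indicator f ⋆[ContinuousLinearMap.mul ℝ ℝ] rhoEps ρ ε) x := by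
  rw [convolution_eq_swap, integral_eq_sq_mul_integral_comp_smul _ hε.ne', ← integral_const_mul,
    mollify]
  congr 1
  ext z
  rw [ContinuousLinearMap.mul_apply', rhoEps, smul_smul, inv_mul_cancel₀ hε.ne', one_smul,
    ← mul_indicator_sub_smul_eq hρ.support_subset hε.le hS]
  field_simp

lemma hasFDerivAt_mollify (hρ : IsMollifier ρ) (hε : 0 < ε) (hf : IntegrableOn f S)
    (hSm : MeasurableSet S) (hx : ∀ᶠ y in 𝓝 x, closedBall y ε ⊆ S) :
    HasFDerivAt (mollify ρ ε f)
      ((S.indicator f ⋆[(ContinuousLinearMap.mul ℝ ℝ).precompR E2] fderiv ℝ (rhoEps ρ ε)) x) x :=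
  ((hasCompactSupport_rhoEps hρ.hasCompactSupport).hasFDerivAt_convolution_right _
    ((integrable_indicator_iff hSm).2 hf).locallyIntegrable (contDiff_rhoEps hρ.contDiff) x)
    |>.congr_of_eventuallyEq (hx.mono fun _ hy => hρ.mollify_eq_convolution_indicator hε hy)

/-- Since `∫ ∂ₖρ = 0`, the derivative of `f^ε` only sees the increments of `f` at scale `ε`. -/
lemma abs_pd_mollify_le (hρ : IsMollifier ρ) (hfm : Measurable f) (hf : HolderBoundOn α N f S)
    (hS : IsCompact S) (hα : 0 ≤ α) (hε : 0 < ε) (hx : ∀ᶠ y in 𝓝 x, closedBall y ε ⊆ S)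
    (k : Fin 2) : |pd k (mollify ρ ε f) x| ≤ ε⁻¹ * ((∫ z, |pd k ρ z|) * (N * ε ^ α)) := by
  have hxS : closedBall x ε ⊆ S := hx.self_of_nhds
  have hfS := (integrable_indicator_iff hS.measurableSet).2 (hf.integrableOn hfm hS)
  have hpd : pd k (mollify ρ ε f) x = ε⁻¹ * ∫ z, pd k ρ z * (f (x - ε • z) - f x) := by
    rw [pd, (hρ.hasFDerivAt_mollify hε (hf.integrableOn hfm hS) hS.measurableSet hx).fderiv,
      convolution_fderiv_rhoEps_apply hρ.contDiff hρ.hasCompactSupport hfS.locallyIntegrable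
        hε.ne',
      hf.integral_mul_sub_eq hfm hε.le hxS (hρ.integrable_pd k) (hρ.support_pd_subset k),
      show ∫ z, pd k ρ z = 0 from integral_fderiv_apply_eq_zero hρ.contDiff hρ.hasCompactSupport _]
    simp only [mul_zero, sub_zero]
    exact congrArg _ (integral_congr_ae (Eventually.of_forall
      (mul_indicator_sub_smul_eq (hρ.support_pd_subset k) hε.le hxS)))
  rw [hpd, abs_mul, abs_inv, abs_of_pos hε]
  gcongr
  exact hf.abs_integral_mul_sub_le hα hε.le hxS (hρ.integrable_pd k) (hρ.support_pd_subset k)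

lemma abs_pd_mollify_mul_le (hρ : IsMollifier ρ) (hfm : Measurable f) (hf : HolderBoundOn α N f S)
    (hS : IsCompact S) (hα : 0 ≤ α) (hε : 0 < ε) (hx : ∀ᶠ y in 𝓝 x, closedBall y ε ⊆ S)
    {φ : E2 → ℝ} (hφ : DifferentiableAt ℝ φ x) (k : Fin 2) :
    |pd k (fun w => mollify ρ ε f w * φ w) x| ≤
      N * |pd k φ x| + |φ x| * (ε⁻¹ * ((∫ z, |pd k ρ z|) * (N * ε ^ α))) := by
  rw [pd_mul (hρ.hasFDerivAt_mollify hε (hf.integrableOn hfm hS) hS.measurableSet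
    hx).differentiableAt hφ k]
  calc _ ≤ |mollify ρ ε f x| * |pd k φ x| + |φ x| * |pd k (mollify ρ ε f) x| := by
        rw [← abs_mul, ← abs_mul]
        exact abs_add_le _ _
    _ ≤ _ := by
      gcongr
      · exact hρ.abs_mollify_le hf hε.le hx.self_of_nhds
      · exact hρ.abs_pd_mollify_le hfm hf hS hα hε hx k

lemma abs_REps_mul_pd_mollify_mul_le (hρ : IsMollifier ρ) (hfm : Measurable f)
    (hgm : Measurable g) (hf : HolderBoundOn α N f S) (hg : HolderBoundOn α M g S)
    (hS : IsCompact S) (hα : 0 ≤ α) (hε : 0 < ε) (hx : ∀ᶠ y in 𝓝 x, closedBall y ε ⊆ S)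
    {φ : E2 → ℝ} (hφ : DifferentiableAt ℝ φ x) (k : Fin 2) :
    |REps ρ ε f g x * pd k (fun w => mollify ρ ε f w * φ w) x| ≤
      2 * (N * M * ε ^ (2 * α)) *
        (N * |pd k φ x| + |φ x| * (ε⁻¹ * ((∫ z, |pd k ρ z|) * (N * ε ^ α)))) := by
  have hxS : x ∈ S := hx.self_of_nhds (mem_closedBall_self hε.le)
  have hN : 0 ≤ N := (abs_nonneg _).trans (hf.abs_le x hxS)
  have hM : 0 ≤ M := (abs_nonneg _).trans (hg.abs_le x hxS)
  rw [abs_mul]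
  gcongr
  · exact hρ.abs_REps_le hfm hgm hf hg hα hε.le hx.self_of_nhds
  · exact hρ.abs_pd_mollify_mul_le hfm hf hS hα hε hx hφ k

theorem abs_setIntegral_REps_mul_pd_le {φ : E2 → ℝ} {K : Set E2} {δ : ℝ} (hρ : IsMollifier ρ)
    (hα : 0 ≤ α) (hfm : Measurable f) (hgm : Measurable g)
    (hf : HolderBoundOn α N f S) (hg : HolderBoundOn α M g S) (hK : IsCompact K)
    (hS : IsCompact S) (hKS : ∀ x ∈ K, closedBall x δ ⊆ S) (hφ : ContDiff ℝ 1 φ) (k : Fin 2) :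
    ∃ D₁ D₂ : ℝ, 0 ≤ D₁ ∧ 0 ≤ D₂ ∧ ∀ ε, 0 < ε → ε < δ →
      |∫ z in K, REps ρ ε f g z * pd k (fun w => mollify ρ ε f w * φ w) z| ≤
        (D₁ * ε ^ (2 * α) + D₂ * ε ^ (3 * α - 1)) * (N ^ 2 * M) := by
  obtain ⟨A, hA0, hA⟩ :=
    (hK.image_of_continuousOn hφ.continuous.continuousOn).isBounded.exists_pos_norm_le
  obtain ⟨B, hB0, hB⟩ :=
    (hK.image_of_continuousOn (continuous_pd hφ k).continuousOn).isBounded.exists_pos_norm_le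
  set Cρ := ∫ z, |pd k ρ z|
  have hCρ : 0 ≤ Cρ := integral_nonneg fun _ => abs_nonneg _
  refine ⟨2 * B * volume.real K, 2 * A * Cρ * volume.real K, by positivity, by positivity,
    fun ε hε hεδ => ?_⟩
  have hpow : ε ^ (3 * α - 1) = ε ^ (2 * α) * (ε ^ α * ε⁻¹) := by
    rw [← Real.rpow_neg_one, ← Real.rpow_add hε, ← Real.rpow_add hε]
    ring_nf
  rw [← Real.norm_eq_abs, hpow]
  refine (norm_setIntegral_le_of_norm_le_const (C := 2 * (N * M * ε ^ (2 * α)) *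
    (N * B + A * (ε⁻¹ * (Cρ * (N * ε ^ α))))) hK.measure_lt_top fun x hx => ?_).trans_eq (by ring)
  have hx' := eventually_closedBall_subset_of_lt hεδ (hKS x hx)
  have hxS : x ∈ S := hKS x hx (mem_closedBall_self (hε.trans hεδ).le)
  have hN : 0 ≤ N := (abs_nonneg _).trans (hf.abs_le x hxS)
  have hM : 0 ≤ M := (abs_nonneg _).trans (hg.abs_le x hxS)
  refine (hρ.abs_REps_mul_pd_mollify_mul_le hfm hgm hf hg hS hα hε hx'
    (hφ.differentiable one_ne_zero x) k).trans ?_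
  gcongr
  · exact hB _ (mem_image_of_mem _ hx)
  · exact hA _ (mem_image_of_mem _ hx)

end IsMollifier

lemma add_mul_sq_mul_le {D₁ D₂ a b N M : ℝ} (hD₁ : 0 ≤ D₁) (hD₂ : 0 ≤ D₂) (ha : 0 ≤ a) (hb : 0 ≤ b)
    (hN : 0 ≤ N) :
    (D₁ * a + D₂ * b) * (N ^ 2 * M) ≤ (D₁ + D₂ * M / N) * (a * N ^ 2 * M + b * N ^ 3) := by
  rcases hN.eq_or_lt with rfl | hN
  · simp
  have h : (D₁ + D₂ * M / N) * (a * N ^ 2 * M + b * N ^ 3) =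
      (D₁ * a + D₂ * b) * (N ^ 2 * M) + (D₁ * b * N ^ 3 + D₂ * a * N * M ^ 2) := by
    field_simp
    ring
  rw [h]
  exact le_add_of_nonneg_right (by positivity)

lemma tendsto_nhdsGT_zero_of_abs_le {F : ℝ → ℝ} {p q δ D₁ D₂ c : ℝ} (hp : 0 < p) (hq : 0 < q)
    (hδ : 0 < δ) (hF : ∀ ε, 0 < ε → ε < δ → |F ε| ≤ (D₁ * ε ^ p + D₂ * ε ^ q) * c) :
    Tendsto F (𝓝[>] 0) (𝓝 0) := by
  have h : ∀ r : ℝ, 0 < r → Tendsto (fun ε : ℝ => ε ^ r) (𝓝[>] 0) (𝓝 0) := fun r hr => by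
    simpa [Real.zero_rpow hr.ne'] using
      (Real.continuousAt_rpow_const 0 r (Or.inr hr.le)).tendsto.mono_left nhdsWithin_le_nhds
  refine squeeze_zero_norm' ?_ (by
    simpa using (((h p hp).const_mul D₁).add ((h q hq).const_mul D₂)).mul_const c)
  filter_upwards [Ioo_mem_nhdsGT hδ] with ε hε using hF ε hε.1 hε.2

theorem stmt11_general (α : ℝ) (hα0 : 0 < α)
    (ρ : EuclideanSpace ℝ (Fin 2) → ℝ)
    (hρ_smooth : ContDiff ℝ (⊤ : ℕ∞) ρ) (hρ_nonneg : ∀ x, 0 ≤ ρ x)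
    (hρ_supp : tsupport ρ ⊆ Metric.ball 0 1)
    (hρ_int : (∫ x, ρ x) = 1)
    (V : Set (EuclideanSpace ℝ (Fin 2))) (hV : IsOpen V)
    (ψ : EuclideanSpace ℝ (Fin 2) → ℝ)
    (hψx : MemHolderLoc α (pd 0 ψ) V) (hψy : MemHolderLoc α (pd 1 ψ) V)
    (φ : EuclideanSpace ℝ (Fin 2) → ℝ)
    (hφ : ContDiff ℝ 1 φ) (hφc : HasCompactSupport φ) (hφV : tsupport φ ⊆ V) :
    (∃ C : ℝ, ∀ ε : ℝ, 0 < ε → ε < sInf (Set.image2 dist (tsupport φ) Vᶜ) / 2 →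
      |∫ z in tsupport φ, REps ρ ε (pd 0 ψ) (pd 1 ψ) z *
          pd 0 (fun w => mollify ρ ε (pd 0 ψ) w * φ w) z| ≤
        C * (ε ^ (2 * α) *
              (holderNorm α (pd 0 ψ)
                {y | Metric.infDist y (tsupport φ) ≤
                  sInf (Set.image2 dist (tsupport φ) Vᶜ) / 2}) ^ 2 *
              holderNorm α (pd 1 ψ)
                {y | Metric.infDist y (tsupport φ) ≤
                  sInf (Set.image2 dist (tsupport φ) Vᶜ) / 2}
            + ε ^ (3 * α - 1) *
              (holderNorm α (pd 0 ψ)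
                {y | Metric.infDist y (tsupport φ) ≤
                  sInf (Set.image2 dist (tsupport φ) Vᶜ) / 2}) ^ 3)) ∧
    (1/3 < α →
      Filter.Tendsto
        (fun ε : ℝ => ∫ z in tsupport φ, REps ρ ε (pd 0 ψ) (pd 1 ψ) z *
          pd 0 (fun w => mollify ρ ε (pd 0 ψ) w * φ w) z)
        (nhdsWithin 0 (Set.Ioi 0)) (nhds 0)) := by
  rcases (tsupport φ).eq_empty_or_nonempty with hK | hK
  · simp only [hK, Measure.restrict_empty, integral_zero_measure]
    exact ⟨⟨0, by simp⟩, fun _ => tendsto_const_nhds⟩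
  have hρ : IsMollifier ρ := ⟨hρ_smooth.of_le (by norm_num), hρ_nonneg, hρ_supp, hρ_int⟩
  have hψm (k : Fin 2) : Measurable (pd k ψ) := measurable_fderiv_apply_const ℝ ψ _
  have key (δ : ℝ) (hδV : {y | infDist y (tsupport φ) ≤ δ} ⊆ V) :=
    have hS := isCompact_setOf_infDist_le hφc hK δ
    hρ.abs_setIntegral_REps_mul_pd_le hα0.le (hψm 0) (hψm 1) (hψx.holderBoundOn hδV hS)
      (hψy.holderBoundOn hδV hS) hφc hS (fun _ hx => closedBall_subset_setOf_infDist_le hx δ) hφ 0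
  refine ⟨?_, fun hα13 => ?_⟩
  · obtain ⟨D₁, D₂, hD₁, hD₂, h⟩ := key _ (setOf_infDist_le_half_sInf_subset hφc hK hV hφV)
    exact ⟨_, fun ε hε hεδ => (h ε hε hεδ).trans (add_mul_sq_mul_le hD₁ hD₂
      (Real.rpow_nonneg hε.le _) (Real.rpow_nonneg hε.le _) (holderNorm_nonneg _ _ _))⟩
  · obtain ⟨δ, hδ, hδV⟩ := exists_pos_setOf_infDist_le_subset hφc hK hV hφV
    obtain ⟨D₁, D₂, -, -, h⟩ := key δ hδV
    exact tendsto_nhdsGT_zero_of_abs_le (by linarith) (by linarith) hδ h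

/-- The key remainder estimate:
`|∫_K R^ε(ψ_x, ψ_y) ∂_x(ψ_x^ε φ)| ≤ C (ε^{2α} ‖ψ_x‖² ‖ψ_y‖ + ε^{3α-1} ‖ψ_x‖³)`,
so that for `α > 1/3` the integral tends to `0` as `ε → 0⁺`. -/
theorem stmt11 (α : ℝ) (hα0 : 0 < α) (hα1 : α ≤ 1)
    (ρ : EuclideanSpace ℝ (Fin 2) → ℝ)
    (hρ_smooth : ContDiff ℝ (⊤ : ℕ∞) ρ) (hρ_nonneg : ∀ x, 0 ≤ ρ x)
    (hρ_supp : tsupport ρ ⊆ Metric.ball 0 1)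
    (hρ_symm : ∀ x, ρ (-x) = ρ x) (hρ_int : (∫ x, ρ x) = 1)
    (V : Set (EuclideanSpace ℝ (Fin 2))) (hV : IsOpen V)
    (ψ : EuclideanSpace ℝ (Fin 2) → ℝ)
    (hψdiff : ∀ z ∈ V, DifferentiableAt ℝ ψ z)
    (hψC1 : ContinuousOn (fun z => fderiv ℝ ψ z) V)
    (hψx : MemHolderLoc α (pd 0 ψ) V) (hψy : MemHolderLoc α (pd 1 ψ) V)
    (φ : EuclideanSpace ℝ (Fin 2) → ℝ)
    (hφ : ContDiff ℝ 1 φ) (hφc : HasCompactSupport φ) (hφV : tsupport φ ⊆ V) :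
    (∃ C : ℝ, ∀ ε : ℝ, 0 < ε → ε < sInf (Set.image2 dist (tsupport φ) Vᶜ) / 2 →
      |∫ z in tsupport φ, REps ρ ε (pd 0 ψ) (pd 1 ψ) z *
          pd 0 (fun w => mollify ρ ε (pd 0 ψ) w * φ w) z| ≤
        C * (ε ^ (2 * α) *
              (holderNorm α (pd 0 ψ)
                {y | Metric.infDist y (tsupport φ) ≤
                  sInf (Set.image2 dist (tsupport φ) Vᶜ) / 2}) ^ 2 *
              holderNorm α (pd 1 ψ)
                {y | Metric.infDist y (tsupport φ) ≤
                  sInf (Set.image2 dist (tsupport φ) Vᶜ) / 2}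
            + ε ^ (3 * α - 1) *
              (holderNorm α (pd 0 ψ)
                {y | Metric.infDist y (tsupport φ) ≤
                  sInf (Set.image2 dist (tsupport φ) Vᶜ) / 2}) ^ 3)) ∧
    (1/3 < α →
      Filter.Tendsto
        (fun ε : ℝ => ∫ z in tsupport φ, REps ρ ε (pd 0 ψ) (pd 1 ψ) z *
          pd 0 (fun w => mollify ρ ε (pd 0 ψ) w * φ w) z)
        (nhdsWithin 0 (Set.Ioi 0)) (nhds 0)) :=
  stmt11_general α hα0 ρ hρ_smooth hρ_nonneg hρ_supp hρ_int V hV ψ hψx hψy φ hφ hφc hφV
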